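/- Let $\{Y_n, n \ge 1\}$ be a sequence of random variables with $0 \le Y_n \le 1$, adapted to an increasing filtration $\{\mathcal{F}_n\}$. Then $\sum_n Y_n < \infty$ almost surely if and only if $\sum_n \mathbb{E}(Y_n \mid \mathcal{F}_{n-1}) < \infty$ almost surely (the two events coincide up to a null set). -/

import Mathlib

open MeasureTheory Filter

/-- Conditional Borel–Cantelli (Hall–Heyde, Corollary 2.3): for an adapted
`[0,1]`-valued sequence, `∑ Y_n < ∞` a.s. iff `∑ E(Y_n | ℱ_{n-1}) < ∞` a.s. -/
theorem conditional_borel_cantelli {Ω : Type*} {m0 : MeasurableSpace Ω}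
    (μ : Measure Ω) [IsProbabilityMeasure μ]
    (ℱ : Filtration ℕ m0) (Y : ℕ → Ω → ℝ)
    (hadapted : Adapted ℱ Y)
    (h0 : ∀ n ω, 0 ≤ Y n ω) (h1 : ∀ n ω, Y n ω ≤ 1) :
    ∀ᵐ ω ∂μ,
      ((Summable fun n => Y (n + 1) ω) ↔ Summable fun n => (μ[Y (n + 1) | ℱ n]) ω) := by
  set f : ℕ → Ω → ℝ := fun n ω => ∑ k ∈ Finset.range n, Y (k + 1) ω with hf
  have hfadapted : Adapted ℱ f := by
    intro n
    refine Finset.measurable_sum _ fun k hk => ?_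
    exact ((hadapted (k + 1)).mono (ℱ.mono (Finset.mem_range.1 hk)) le_rfl)
  have hfint : ∀ n, Integrable (f n) μ := by
    intro n
    refine integrable_finset_sum _ fun k _ => ?_
    have : Integrable (fun _ : Ω => (1 : ℝ)) μ := integrable_const 1
    refine this.mono ((hadapted (k + 1)).mono (ℱ.le _) le_rfl).aestronglyMeasurable
      (Filter.Eventually.of_forall fun ω => ?_)
    rw [Real.norm_eq_abs, norm_one, abs_of_nonneg (h0 _ ω)]
    exact h1 _ ω
  have hfmono : ∀ ω n, f n ω ≤ f (n + 1) ω := by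
    intro ω n
    rw [hf]
    simp only [Finset.sum_range_succ]
    exact le_add_of_nonneg_right (h0 _ ω)
  have hbdd : ∀ᵐ ω ∂μ, ∀ n, |f (n + 1) ω - f n ω| ≤ ((1 : NNReal) : ℝ) := by
    refine Filter.Eventually.of_forall fun ω n => ?_
    rw [hf]
    simp only [Finset.sum_range_succ, add_sub_cancel_left, NNReal.coe_one]
    rw [abs_of_nonneg (h0 _ ω)]
    exact h1 _ ω
  have hkey := tendsto_sum_indicator_atTop_iff
    (Filter.Eventually.of_forall fun ω n => hfmono ω n) hfadapted.stronglyAdapted hfint hbdd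
  have hdiff : ∀ k, f (k + 1) - f k = Y (k + 1) := by
    intro k
    funext ω
    simp [hf, Finset.sum_range_succ]
  have hpred : ∀ n ω, predictablePart f ℱ μ n ω
      = ∑ k ∈ Finset.range n, (μ[Y (k + 1) | ℱ k]) ω := by
    intro n ω
    simp only [predictablePart, Finset.sum_apply]
    refine Finset.sum_congr rfl fun k _ => ?_
    rw [hdiff k]
  have hcond : ∀ᵐ ω ∂μ, ∀ n, 0 ≤ (μ[Y (n + 1) | ℱ n]) ω := by
    rw [ae_all_iff]
    intro n
    exact condExp_nonneg (Filter.Eventually.of_forall fun ω => h0 (n + 1) ω)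
  filter_upwards [hkey, hcond] with ω hω hcω
  rw [summable_iff_not_tendsto_nat_atTop_of_nonneg (fun n => h0 _ ω),
    summable_iff_not_tendsto_nat_atTop_of_nonneg hcω, not_iff_not]
  simp only [hpred] at hω
  exact hω
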